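/- Let X ⊆ B(H) be a unital operator space, S ⊆ B(H) an injective envelope of X containing X with inclusion as the embedding, and φ: B(H) → S an X-projection onto S. If ψ: B(H) → B(H) is an X-map with ‖ψ_ν([a_{ij}])‖ ≤ ‖φ_ν([a_{ij}])‖ for all ν and all [a_{ij}] ∈ M_ν(B(H)), then ‖ψ_ν([a_{ij}])‖ = ‖φ_ν([a_{ij}])‖ for all ν and all [a_{ij}]; that is, the X-seminorm p_φ(a) = ‖φ(a)‖ is minimal in the complete order ≤_c among X-seminorms. -/

import Mathlib

set_option synthInstance.maxHeartbeats 1000000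
set_option maxHeartbeats 1000000

noncomputable section

open scoped ComplexOrder

/-- A positive operator on a complex inner-product space:
`⟪v, T v⟫ ≥ 0` for every vector `v`. -/
def IsPosOp {E : Type} [NormedAddCommGroup E] [InnerProductSpace ℂ E]
    (T : E →L[ℂ] E) : Prop := ∀ v : E, 0 ≤ (inner ℂ v (T v) : ℂ)

/-- `B(H)`, the bounded operators on `H`. -/
abbrev BH (H : Type) [NormedAddCommGroup H] [InnerProductSpace ℂ H] : Type := H →L[ℂ] H

section Defs

variable {H K : Type}
variable [NormedAddCommGroup H] [InnerProductSpace ℂ H] [CompleteSpace H]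
variable [NormedAddCommGroup K] [InnerProductSpace ℂ K] [CompleteSpace K]

/-- The amplification of a matrix over `B(H)` to an operator on the Hilbert space
`ℓ²`-direct sum of `n` copies of `H`. -/
def amp {n : ℕ} (A : Matrix (Fin n) (Fin n) (BH H)) :
    (PiLp 2 fun _ : Fin n => H) →L[ℂ] PiLp 2 fun _ : Fin n => H :=
  ∑ i : Fin n, ∑ j : Fin n,
    ((PiLp.continuousLinearEquiv 2 ℂ fun _ : Fin n => H).symm.toContinuousLinearMap).comp
      ((ContinuousLinearMap.pi (Pi.single i (ContinuousLinearMap.id ℂ H))).comp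
        ((A i j).comp
          ((ContinuousLinearMap.proj j).comp
            ((PiLp.continuousLinearEquiv 2 ℂ fun _ : Fin n => H).toContinuousLinearMap))))

/-- The matrix norms defining the (concrete) operator space structure of `B(H)`. -/
def matNorm {n : ℕ} (A : Matrix (Fin n) (Fin n) (BH H)) : ℝ := ‖amp A‖

/-- The quotient matrix (semi)norm modulo a subset `J ⊆ B(H)`:
`‖[x i j] + Mₙ(J)‖ = inf { ‖[x i j + y i j]‖ : y i j ∈ J }`. -/
def qnorm (J : Set (BH H)) {n : ℕ} (A : Matrix (Fin n) (Fin n) (BH H)) : ℝ :=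
  ⨅ B : Matrix (Fin n) (Fin n) J, matNorm (A + B.map fun b => (b : BH H))

/-- The scalar-level quotient (semi)norm modulo a subset `J ⊆ B(H)`. -/
def qnorm1 (J : Set (BH H)) (a : BH H) : ℝ := ⨅ b : J, ‖a + (b : BH H)‖

/-- A self-adjoint subspace. -/
def StarClosed (I : Submodule ℂ (BH H)) : Prop := ∀ a ∈ I, star a ∈ I

/-- A completely contractive map defined on a subspace `X ⊆ B(H)` with values in `B(K)`. -/
def CCmap (X : Submodule ℂ (BH H)) (φ : X →ₗ[ℂ] BH K) : Prop :=
  ∀ (n : ℕ) (A : Matrix (Fin n) (Fin n) X),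
    matNorm (A.map fun x => φ x) ≤ matNorm (A.map fun x => (x : BH H))

/-- A completely isometric map defined on a subspace `X ⊆ B(H)` with values in `B(K)`. -/
def CImap (X : Submodule ℂ (BH H)) (φ : X →ₗ[ℂ] BH K) : Prop :=
  ∀ (n : ℕ) (A : Matrix (Fin n) (Fin n) X),
    matNorm (A.map fun x => φ x) = matNorm (A.map fun x => (x : BH H))

/-- A completely contractive map defined on all of `B(H)`. -/
def CCfull (φ : BH H →ₗ[ℂ] BH K) : Prop :=
  ∀ (n : ℕ) (A : Matrix (Fin n) (Fin n) (BH H)),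
    matNorm (A.map fun a => φ a) ≤ matNorm A

/-- A completely positive map defined on all of `B(H)`. -/
def CPfull (φ : BH H →ₗ[ℂ] BH H) : Prop :=
  ∀ (n : ℕ) (A : Matrix (Fin n) (Fin n) (BH H)),
    IsPosOp (amp A) → IsPosOp (amp (A.map fun a => φ a))

/-- A completely positive map defined on an operator (sub)system `S ⊆ B(H)`. -/
def CPmap (S : Submodule ℂ (BH H)) (φ : S →ₗ[ℂ] BH K) : Prop :=
  ∀ (n : ℕ) (A : Matrix (Fin n) (Fin n) S),
    IsPosOp (amp (A.map fun s => (s : BH H))) → IsPosOp (amp (A.map fun s => φ s))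

/-- `J ⊆ B(K)` is boundary for `X` (embedded in `B(K)` via `j`) if the quotient map
by `J` is completely isometric on (the copy of) `X`. -/
def IsBoundarySet (X : Submodule ℂ (BH H)) (j : X →ₗ[ℂ] BH K) (J : Set (BH K)) : Prop :=
  ∀ (n : ℕ) (A : Matrix (Fin n) (Fin n) X),
    qnorm J (A.map fun x => j x) = matNorm (A.map fun x => (x : BH H))

/-- A boundary subsystem for `X` in `B(H)`: a self-adjoint subspace on which the
quotient map is completely isometric on `X`. -/
def IsBoundary (X I : Submodule ℂ (BH H)) : Prop :=
  StarClosed I ∧ IsBoundarySet X X.subtype (I : Set (BH H))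

/-- A maximal boundary subsystem for `X` in `B(H)`. -/
def IsMaximalBoundary (X I : Submodule ℂ (BH H)) : Prop :=
  IsBoundary X I ∧ ∀ J : Submodule ℂ (BH H), IsBoundary X J → I ≤ J → J = I

/-- Complete contractivity for a linear self-map of the quotient operator space `B(H)/I`
(expressed via arbitrary representatives, as `qnorm` only depends on the classes). -/
def CCQuotEndo (I : Submodule ℂ (BH H)) (φ : (BH H ⧸ I) →ₗ[ℂ] BH H ⧸ I) : Prop :=
  ∀ (n : ℕ) (A B : Matrix (Fin n) (Fin n) (BH H)),
    (∀ i j, φ (I.mkQ (A i j)) = I.mkQ (B i j)) →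
      qnorm (I : Set (BH H)) B ≤ qnorm (I : Set (BH H)) A

/-- Complete contractivity for a linear map from a subspace `Z ⊆ B(K)` into the
quotient operator space `B(H)/I`. -/
def CCToQuot (Z : Submodule ℂ (BH K)) (I : Submodule ℂ (BH H))
    (φ : Z →ₗ[ℂ] BH H ⧸ I) : Prop :=
  ∀ (n : ℕ) (A : Matrix (Fin n) (Fin n) Z) (B : Matrix (Fin n) (Fin n) (BH H)),
    (∀ i j, I.mkQ (B i j) = φ (A i j)) →
      qnorm (I : Set (BH H)) B ≤ matNorm (A.map fun z => (z : BH K))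

/-- Injectivity of a (unital) operator space `S ⊆ B(H)` in the category of operator
spaces with unital completely contractive maps. -/
def Injective (S : Submodule ℂ (BH H)) : Prop :=
  ∀ (K : Type) [NormedAddCommGroup K] [InnerProductSpace ℂ K] [CompleteSpace K],
    ∀ (Z Y : Submodule ℂ (BH K)) (hZY : Z ≤ Y) (h1Z : (1 : BH K) ∈ Z)
      (φ : Z →ₗ[ℂ] BH H), (∀ z, φ z ∈ S) → CCmap Z φ → φ ⟨1, h1Z⟩ = 1 →
      ∃ ψ : Y →ₗ[ℂ] BH H, (∀ y, ψ y ∈ S) ∧ CCmap Y ψ ∧ ψ ⟨1, hZY h1Z⟩ = 1 ∧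
        ∀ z : Z, ψ (Submodule.inclusion hZY z) = φ z

/-- `(S, ι)` is an injective envelope of the unital operator space `X`:
a unital completely isometric extension which is injective and rigid. -/
structure IsInjEnvelope (X : Submodule ℂ (BH H)) (S : Submodule ℂ (BH K))
    (ι : X →ₗ[ℂ] BH K) : Prop where
  mem : ∀ x, ι x ∈ S
  one : (1 : BH K) ∈ S
  unital : ∀ h1 : (1 : BH H) ∈ X, ι ⟨1, h1⟩ = 1
  ci : CImap X ι
  inj : Injective S
  rigid : ∀ φ : S →ₗ[ℂ] BH K, (∀ s, φ s ∈ S) → CCmap S φ →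
    (∀ x : X, φ ⟨ι x, mem x⟩ = ι x) → ∀ s : S, φ s = (s : BH K)

/-- A (closed, two-sided) ideal of the C*-subalgebra `C ⊆ B(K)`, described as a subset. -/
def IsIdealSet (C : StarSubalgebra ℂ (BH K)) (J : Set (BH K)) : Prop :=
  J ⊆ (C : Set (BH K)) ∧ (0 : BH K) ∈ J ∧
    (∀ a ∈ J, ∀ b ∈ J, a + b ∈ J) ∧ (∀ (c : ℂ), ∀ a ∈ J, c • a ∈ J) ∧
    (∀ c ∈ C, ∀ a ∈ J, c * a ∈ J ∧ a * c ∈ J) ∧ IsClosed J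

/-- A boundary ideal for `X` (embedded via `j`) in the C*-cover `C`. -/
def IsBdryIdeal (X : Submodule ℂ (BH H)) (j : X →ₗ[ℂ] BH K)
    (C : StarSubalgebra ℂ (BH K)) (J : Set (BH K)) : Prop :=
  IsIdealSet C J ∧ IsBoundarySet X j J

/-- `(C, j)` is a C*-cover of the unital operator space `X`. -/
structure IsCstarCover (X : Submodule ℂ (BH H)) (C : StarSubalgebra ℂ (BH K))
    (j : X →ₗ[ℂ] BH K) : Prop where
  mem : ∀ x, j x ∈ C
  unital : ∀ h1 : (1 : BH H) ∈ X, j ⟨1, h1⟩ = 1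
  ci : CImap X j
  gen : C = (StarAlgebra.adjoin ℂ (Set.range fun x : X => j x)).topologicalClosure

end Defs

/-! Since `‖ψ a‖ ≤ ‖φ a‖`, the kernel of the idempotent `φ` lies in that of `ψ`, so `ψ ∘ φ = ψ`.
On the other hand `φ ∘ ψ` restricts to a completely contractive self-map of `S` fixing `X`,
hence is the identity of `S` by rigidity of the injective envelope. Therefore
`‖φₙ(A)‖ = ‖φₙ(ψₙ(φₙ(A)))‖ ≤ ‖ψₙ(φₙ(A))‖ = ‖ψₙ(A)‖`. -/

theorem PiLp.norm_fin_one {E : Type*} [NormedAddCommGroup E] (v : PiLp 2 fun _ : Fin 1 => E) :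
    ‖v‖ = ‖v 0‖ := by
  simp [PiLp.norm_eq_of_L2, Real.sqrt_sq (norm_nonneg _)]

section MatNorm

variable {H K : Type} [NormedAddCommGroup H] [InnerProductSpace ℂ H]
  [NormedAddCommGroup K] [InnerProductSpace ℂ K]

theorem amp_fin_one_apply (A : Matrix (Fin 1) (Fin 1) (BH H)) (v : PiLp 2 fun _ : Fin 1 => H) :
    amp A v 0 = A 0 0 (v 0) := by
  simp [amp]

theorem matNorm_fin_one (A : Matrix (Fin 1) (Fin 1) (BH H)) : matNorm A = ‖A 0 0‖ := by
  refine le_antisymm (ContinuousLinearMap.opNorm_le_bound _ (norm_nonneg _) fun v => ?_)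
    (ContinuousLinearMap.opNorm_le_bound _ (norm_nonneg (amp A)) fun w => ?_)
  · rw [PiLp.norm_fin_one, amp_fin_one_apply, PiLp.norm_fin_one v]
    exact (A 0 0).le_opNorm _
  · let v : PiLp 2 fun _ : Fin 1 => H := WithLp.toLp 2 fun _ => w
    calc ‖A 0 0 w‖ = ‖amp A v‖ := by rw [PiLp.norm_fin_one, amp_fin_one_apply]
      _ ≤ matNorm A * ‖v‖ := (amp A).le_opNorm v
      _ = matNorm A * ‖w‖ := by rw [PiLp.norm_fin_one]

theorem norm_le_of_matNorm_map_le {φ ψ : BH H →ₗ[ℂ] BH K}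
    (hdom : ∀ (n : ℕ) (A : Matrix (Fin n) (Fin n) (BH H)),
      matNorm (A.map fun a => ψ a) ≤ matNorm (A.map fun a => φ a)) (a : BH H) :
    ‖ψ a‖ ≤ ‖φ a‖ := by
  simpa [matNorm_fin_one] using hdom 1 (Matrix.of fun _ _ => a)

end MatNorm

theorem LinearMap.comp_eq_of_isIdempotentElem_of_ker_le {R M N : Type*} [Ring R]
    [AddCommGroup M] [Module R M] [AddCommGroup N] [Module R N] {φ : M →ₗ[R] M}
    {ψ : M →ₗ[R] N} (hφ : IsIdempotentElem φ) (hker : ker φ ≤ ker ψ) : ψ ∘ₗ φ = ψ := by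
  ext a
  have : φ a - a ∈ ker φ := by
    rw [mem_ker, map_sub, ← Module.End.mul_apply, hφ.eq, sub_self]
  simpa [sub_eq_zero] using hker this

theorem LinearMap.ker_le_ker_of_norm_le {R E F G : Type*} [Semiring R] [AddCommMonoid E]
    [SeminormedAddCommGroup F] [NormedAddCommGroup G] [Module R E] [Module R F] [Module R G]
    {φ : E →ₗ[R] F} {ψ : E →ₗ[R] G} (h : ∀ a, ‖ψ a‖ ≤ ‖φ a‖) : ker φ ≤ ker ψ := fun a ha =>
  norm_le_zero_iff.mp (by simpa [mem_ker.mp ha] using h a)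

section CompletelyContractive

variable {H K L : Type} [NormedAddCommGroup H] [InnerProductSpace ℂ H]
  [NormedAddCommGroup K] [InnerProductSpace ℂ K] [NormedAddCommGroup L] [InnerProductSpace ℂ L]

theorem CCfull.comp {φ : BH K →ₗ[ℂ] BH L} {ψ : BH H →ₗ[ℂ] BH K} (hφ : CCfull φ)
    (hψ : CCfull ψ) : CCfull (φ ∘ₗ ψ) := fun n A => by
  simpa [Matrix.map_map, Function.comp_def] using (hφ n (A.map ψ)).trans (hψ n A)

theorem CCfull.ccmap_comp_subtype {φ : BH H →ₗ[ℂ] BH K} (hφ : CCfull φ)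
    (S : Submodule ℂ (BH H)) : CCmap S (φ ∘ₗ S.subtype) := fun n A => by
  simpa [Matrix.map_map, Function.comp_def] using hφ n (A.map S.subtype)

theorem IsInjEnvelope.apply_eq_self_of_ccfull {X : Submodule ℂ (BH H)} {S : Submodule ℂ (BH K)}
    {ι : X →ₗ[ℂ] BH K} (env : IsInjEnvelope X S ι) {θ : BH K →ₗ[ℂ] BH K} (hθ : CCfull θ)
    (hθS : ∀ s ∈ S, θ s ∈ S) (hθX : ∀ x, θ (ι x) = ι x) (s : BH K) (hs : s ∈ S) : θ s = s :=
  env.rigid (θ ∘ₗ S.subtype) (fun s => hθS s s.2) (hθ.ccmap_comp_subtype S) (fun x => hθX x)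
    ⟨s, hs⟩

end CompletelyContractive

theorem Xseminorm_minimal_general {H : Type} [NormedAddCommGroup H] [InnerProductSpace ℂ H]
    (X S : Submodule ℂ (BH H))
    (env : IsInjEnvelope X S X.subtype)
    (φ : BH H →ₗ[ℂ] BH H) (hφcc : CCfull φ) (hφX : ∀ x ∈ X, φ x = x)
    (hφproj : ∀ a, φ (φ a) = φ a) (hφS : ∀ a, φ a ∈ S)
    (ψ : BH H →ₗ[ℂ] BH H) (hψcc : CCfull ψ) (hψX : ∀ x ∈ X, ψ x = x)
    (hdom : ∀ (n : ℕ) (A : Matrix (Fin n) (Fin n) (BH H)),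
      matNorm (A.map fun a => ψ a) ≤ matNorm (A.map fun a => φ a)) :
    ∀ (n : ℕ) (A : Matrix (Fin n) (Fin n) (BH H)),
      matNorm (A.map fun a => ψ a) = matNorm (A.map fun a => φ a) := by
  have hψφ : ψ ∘ₗ φ = ψ := LinearMap.comp_eq_of_isIdempotentElem_of_ker_le (LinearMap.ext hφproj)
    (LinearMap.ker_le_ker_of_norm_le (norm_le_of_matNorm_map_le hdom))
  have hφψ : ∀ s ∈ S, φ (ψ s) = s := env.apply_eq_self_of_ccfull (θ := φ ∘ₗ ψ)
    (hφcc.comp hψcc) (fun _ _ => hφS _) (fun x => by simp [hψX x x.2, hφX x x.2])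
  intro n A
  refine le_antisymm (hdom n A) ?_
  calc matNorm (A.map fun a => φ a)
      = matNorm ((A.map fun a => ψ (φ a)).map fun a => φ a) := by
        simp [Matrix.map_map, Function.comp_def, hφψ _ (hφS _)]
    _ ≤ matNorm (A.map fun a => ψ (φ a)) := hφcc n _
    _ = matNorm (A.map fun a => ψ a) := by simp only [← LinearMap.comp_apply ψ φ, hψφ]

/-- if `φ` is an `X`-projection of `B(H)` onto an injective envelope `S` of
`X` and `ψ` is an `X`-map whose matrix seminorms are dominated by those of `φ`, then they
agree at all matrix levels: `p_φ` is a `≤_c`-minimal `X`-seminorm. -/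
theorem Xseminorm_minimal {H : Type} [NormedAddCommGroup H] [InnerProductSpace ℂ H]
    [CompleteSpace H] (X S : Submodule ℂ (BH H)) (h1X : (1 : BH H) ∈ X) (hXS : X ≤ S)
    (env : IsInjEnvelope X S X.subtype)
    (φ : BH H →ₗ[ℂ] BH H) (hφcc : CCfull φ) (hφ1 : φ 1 = 1) (hφX : ∀ x ∈ X, φ x = x)
    (hφproj : ∀ a, φ (φ a) = φ a) (hφS : ∀ a, φ a ∈ S) (hφfix : ∀ s ∈ S, φ s = s)
    (ψ : BH H →ₗ[ℂ] BH H) (hψcc : CCfull ψ) (hψ1 : ψ 1 = 1) (hψX : ∀ x ∈ X, ψ x = x)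
    (hdom : ∀ (n : ℕ) (A : Matrix (Fin n) (Fin n) (BH H)),
      matNorm (A.map fun a => ψ a) ≤ matNorm (A.map fun a => φ a)) :
    ∀ (n : ℕ) (A : Matrix (Fin n) (Fin n) (BH H)),
      matNorm (A.map fun a => ψ a) = matNorm (A.map fun a => φ a) :=
  Xseminorm_minimal_general X S env φ hφcc hφX hφproj hφS ψ hψcc hψX hdom
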